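/- Let k be a field and let A = k⟦x,y⟧/(xy). Let σ be the k-algebra automorphism of A that exchanges x and y. Then the k-algebra homomorphism k⟦t⟧ → A determined by t ↦ x + y is injective, and its range is exactly the subalgebra of elements of A fixed by σ. In particular, the ring of invariants of the branch-exchanging involution on the complete local ring of a node is a formal power series ring in one variable, hence regular. -/

import Mathlib

/-- The coefficientwise exchange of the two variables `x ↦ y`, `y ↦ x` on `k⟦x,y⟧`
(with `x` the variable of index `0` and `y` the variable of index `1`). -/
noncomputable def nodeSwap (k : Type*) [Field k] :
    MvPowerSeries (Fin 2) k → MvPowerSeries (Fin 2) k :=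
  fun f d => MvPowerSeries.coeff (R := k) (Finsupp.single 0 (d 1) + Finsupp.single 1 (d 0)) f

/-- The coefficientwise substitution `t ↦ x + y`, `k⟦t⟧ → k⟦x,y⟧`; the coefficient of
`x^a y^b` in `f(x + y)` is `(a+b choose a)` times the coefficient of `t^(a+b)` in `f`. -/
noncomputable def nodeSumSubst (k : Type*) [Field k] :
    PowerSeries k → MvPowerSeries (Fin 2) k :=
  fun f d => (Nat.choose (d 0 + d 1) (d 0) : k) * PowerSeries.coeff (R := k) (d 0 + d 1) f

namespace NodeAux

variable {k : Type*} [Field k]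

lemma fin2_ext (d : Fin 2 →₀ ℕ) : d = Finsupp.single 0 (d 0) + Finsupp.single 1 (d 1) := by
  ext i; fin_cases i <;> simp

lemma eval0 (m n : ℕ) : ((Finsupp.single (0:Fin 2) m + Finsupp.single 1 n : Fin 2 →₀ ℕ)) 0 = m :=
  by simp

lemma eval1 (m n : ℕ) : ((Finsupp.single (0:Fin 2) m + Finsupp.single 1 n : Fin 2 →₀ ℕ)) 1 = n :=
  by simp

lemma coeff_S (f : PowerSeries k) (d : Fin 2 →₀ ℕ) :
    MvPowerSeries.coeff (R := k) d (nodeSumSubst k f)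
      = (Nat.choose (d 0 + d 1) (d 0) : k) * PowerSeries.coeff (R := k) (d 0 + d 1) f := rfl

lemma coeff_nodeSwap (g : MvPowerSeries (Fin 2) k) (u : Fin 2 →₀ ℕ) :
    MvPowerSeries.coeff (R := k) u (nodeSwap k g)
      = MvPowerSeries.coeff (R := k) (Finsupp.single 0 (u 1) + Finsupp.single 1 (u 0)) g := rfl

lemma S_C (c : k) : nodeSumSubst k (PowerSeries.C (R := k) c) = MvPowerSeries.C (σ := Fin 2) (R := k) c := by
  ext d
  rw [coeff_S, PowerSeries.coeff_C, MvPowerSeries.coeff_C]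
  by_cases h : d = 0
  · subst h; simp
  · have hN : ¬ (d 0 + d 1 = 0) := by
      intro hN
      apply h
      have h0 : d 0 = 0 := by omega
      have h1 : d 1 = 0 := by omega
      rw [fin2_ext d, h0, h1]; simp
    rw [if_neg hN, if_neg h, mul_zero]

lemma S_add (f g : PowerSeries k) :
    nodeSumSubst k (f + g) = nodeSumSubst k f + nodeSumSubst k g := by
  ext d
  rw [map_add, coeff_S, coeff_S, coeff_S, map_add]
  ring

lemma S_mul (f g : PowerSeries k) :
    nodeSumSubst k (f * g) = nodeSumSubst k f * nodeSumSubst k g := by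
  ext d
  rw [coeff_S, MvPowerSeries.coeff_mul, PowerSeries.coeff_mul, Finset.mul_sum]
  set a := d 0
  set b := d 1
  -- transform LHS using Vandermonde
  have step1 : ∀ mn ∈ Finset.HasAntidiagonal.antidiagonal (a + b),
      (((a + b).choose a : k)) * (PowerSeries.coeff (R := k) mn.1 f * PowerSeries.coeff (R := k) mn.2 g)
        = ∑ ij ∈ Finset.HasAntidiagonal.antidiagonal a,
            ((mn.1.choose ij.1 : k) * (mn.2.choose ij.2 : k))
              * (PowerSeries.coeff (R := k) mn.1 f * PowerSeries.coeff (R := k) mn.2 g) := by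
    intro mn hmn
    have hmn' : mn.1 + mn.2 = a + b := Finset.HasAntidiagonal.mem_antidiagonal.mp hmn
    rw [← Finset.sum_mul]
    congr 1
    rw [← hmn']
    push_cast [Nat.add_choose_eq]
    rfl
  rw [Finset.sum_congr rfl step1, ← Finset.sum_product']
  -- drop the vanishing terms
  have step2 :
      ∀ x ∈ (Finset.HasAntidiagonal.antidiagonal (a + b)) ×ˢ (Finset.HasAntidiagonal.antidiagonal a),
        ((x.1.1.choose x.2.1 : k) * (x.1.2.choose x.2.2 : k))
            * (PowerSeries.coeff (R := k) x.1.1 f * PowerSeries.coeff (R := k) x.1.2 g) ≠ 0 →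
          (x.2.1 ≤ x.1.1 ∧ x.2.2 ≤ x.1.2) := by
    intro x _ hx
    by_contra hc
    push_neg at hc
    rcases le_or_gt x.2.1 x.1.1 with h1 | h1
    · have h2 := hc h1
      rw [Nat.choose_eq_zero_of_lt h2] at hx
      simp at hx
    · rw [Nat.choose_eq_zero_of_lt h1] at hx
      simp at hx
  rw [← Finset.sum_filter_of_ne step2]
  -- reindex to the Finsupp antidiagonal
  refine Finset.sum_nbij'
    (fun x => (Finsupp.single 0 x.2.1 + Finsupp.single 1 (x.1.1 - x.2.1),
               Finsupp.single 0 x.2.2 + Finsupp.single 1 (x.1.2 - x.2.2)))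
    (fun pq => ((pq.1 0 + pq.1 1, pq.2 0 + pq.2 1), (pq.1 0, pq.2 0)))
    ?_ ?_ ?_ ?_ ?_
  · -- maps into antidiagonal d
    intro x hx
    simp only [Finset.mem_filter, Finset.mem_product, Finset.HasAntidiagonal.mem_antidiagonal] at hx
    obtain ⟨⟨hN, ha⟩, hle1, hle2⟩ := hx
    rw [Finset.HasAntidiagonal.mem_antidiagonal]
    have hb : (x.1.1 - x.2.1) + (x.1.2 - x.2.2) = b := by omega
    rw [fin2_ext d]
    ext i
    fin_cases i <;> simp [Finsupp.single_apply] <;> omega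
  · -- reverse map into the filtered set
    intro pq hpq
    rw [Finset.HasAntidiagonal.mem_antidiagonal] at hpq
    have h0 : pq.1 0 + pq.2 0 = a := by
      have := congrArg (fun (u : Fin 2 →₀ ℕ) => u 0) hpq; simpa using this
    have h1 : pq.1 1 + pq.2 1 = b := by
      have := congrArg (fun (u : Fin 2 →₀ ℕ) => u 1) hpq; simpa using this
    simp only [Finset.mem_filter, Finset.mem_product, Finset.HasAntidiagonal.mem_antidiagonal]
    refine ⟨⟨by omega, by omega⟩, by omega, by omega⟩
  · -- left inverse
    intro x hx
    simp only [Finset.mem_filter, Finset.mem_product, Finset.HasAntidiagonal.mem_antidiagonal] at hx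
    obtain ⟨⟨hN, ha⟩, hle1, hle2⟩ := hx
    simp only [eval0, eval1]
    ext : 1 <;> ext : 1 <;> simp <;> omega
  · -- right inverse
    intro pq hpq
    have h1 : pq.1 0 + pq.1 1 - pq.1 0 = pq.1 1 := by omega
    have h2 : pq.2 0 + pq.2 1 - pq.2 0 = pq.2 1 := by omega
    dsimp only
    rw [h1, h2, ← fin2_ext pq.1, ← fin2_ext pq.2]
  · -- terms agree
    intro x hx
    simp only [eval0, eval1]
    simp only [Finset.mem_filter, Finset.mem_product, Finset.HasAntidiagonal.mem_antidiagonal] at hx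
    obtain ⟨⟨hN, ha⟩, hle1, hle2⟩ := hx
    rw [coeff_S, coeff_S, eval0, eval1, eval0, eval1]
    have e1 : x.2.1 + (x.1.1 - x.2.1) = x.1.1 := by omega
    have e2 : x.2.2 + (x.1.2 - x.2.2) = x.1.2 := by omega
    rw [e1, e2]
    ring

/-- `t ↦ x + y` as a `k`-algebra homomorphism `k⟦t⟧ → k⟦x,y⟧`. -/
noncomputable def nodeAlg (k : Type*) [Field k] :
    PowerSeries k →ₐ[k] MvPowerSeries (Fin 2) k where
  toFun := nodeSumSubst k
  map_one' := by
    have := S_C (1 : k)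
    simpa using this
  map_mul' := S_mul
  map_zero' := by
    ext d
    rw [coeff_S]
    simp
  map_add' := S_add
  commutes' := fun c => by
    rw [PowerSeries.algebraMap_apply, MvPowerSeries.algebraMap_apply]
    simp only [Algebra.algebraMap_self_apply]
    exact S_C c

lemma coeff_single0 (f : PowerSeries k) (n : ℕ) :
    MvPowerSeries.coeff (R := k) (Finsupp.single 0 n) (nodeSumSubst k f)
      = PowerSeries.coeff (R := k) n f := by
  rw [coeff_S]
  simp

lemma coeff_single1 (f : PowerSeries k) (n : ℕ) :
    MvPowerSeries.coeff (R := k) (Finsupp.single 1 n) (nodeSumSubst k f)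
      = PowerSeries.coeff (R := k) n f := by
  rw [coeff_S]
  simp

/-- The generator `xy` of `I` as a monomial. -/
lemma XY_eq : (MvPowerSeries.X 0 * MvPowerSeries.X 1 : MvPowerSeries (Fin 2) k)
    = MvPowerSeries.monomial (R := k) (Finsupp.single 0 1 + Finsupp.single 1 1) 1 := by
  rw [MvPowerSeries.X_def, MvPowerSeries.X_def, MvPowerSeries.monomial_mul_monomial, one_mul]

/-- Multiples of `xy` have zero coefficients on pure powers of `x`. -/
lemma coeff_single0_of_dvd {h : MvPowerSeries (Fin 2) k}
    (hd : (MvPowerSeries.X 0 * MvPowerSeries.X 1 : MvPowerSeries (Fin 2) k) ∣ h) (n : ℕ) :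
    MvPowerSeries.coeff (R := k) (Finsupp.single 0 n) h = 0 := by
  obtain ⟨c, rfl⟩ := hd
  rw [XY_eq, MvPowerSeries.coeff_monomial_mul, if_neg]
  intro hle
  have := Finsupp.le_def.mp hle 1
  simp at this

end NodeAux

/-- Let `k` be a field and `A = k⟦x,y⟧/(xy)` the complete local ring of a node, and let
`σ` be the `k`-algebra automorphism of `A` exchanging `x` and `y`. The `k`-algebra
homomorphism `k⟦t⟧ → A` determined by `t ↦ x + y` is injective with range exactly the
subalgebra of elements fixed by `σ`: the invariant ring of the branch-exchanging
involution on the complete local ring of a node is a power series ring in one variable,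
hence regular. -/
theorem node_involution_invariants
    (k : Type*) [Field k]
    (I : Ideal (MvPowerSeries (Fin 2) k))
    (hI : I = Ideal.span {MvPowerSeries.X 0 * MvPowerSeries.X 1})
    (σ : (MvPowerSeries (Fin 2) k ⧸ I) ≃ₐ[k] (MvPowerSeries (Fin 2) k ⧸ I))
    (hσ : ∀ f : MvPowerSeries (Fin 2) k,
      σ (Ideal.Quotient.mk I f) = Ideal.Quotient.mk I (nodeSwap k f)) :
    ∃ Φ : PowerSeries k →ₐ[k] (MvPowerSeries (Fin 2) k ⧸ I),
      (∀ f : PowerSeries k, Φ f = Ideal.Quotient.mk I (nodeSumSubst k f)) ∧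
      Function.Injective Φ ∧
      Set.range ⇑Φ = {a : MvPowerSeries (Fin 2) k ⧸ I | σ a = a} := by
  classical
  open NodeAux in
  refine ⟨(Ideal.Quotient.mkₐ k I).comp (nodeAlg k), fun f => rfl, ?_, ?_⟩
  · -- injectivity
    rw [injective_iff_map_eq_zero]
    intro f hf
    have hmem : nodeSumSubst k f ∈ I := by
      rwa [← Ideal.Quotient.eq_zero_iff_mem]
    rw [hI, Ideal.mem_span_singleton] at hmem
    ext n
    rw [← NodeAux.coeff_single0 f n, NodeAux.coeff_single0_of_dvd hmem n, map_zero]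
  · -- range
    apply Set.Subset.antisymm
    · rintro _ ⟨f, rfl⟩
      show σ (Ideal.Quotient.mk I (nodeSumSubst k f)) = Ideal.Quotient.mk I (nodeSumSubst k f)
      rw [hσ]
      congr 1
      ext d
      rw [NodeAux.coeff_nodeSwap, NodeAux.coeff_S, NodeAux.coeff_S, NodeAux.eval0,
        NodeAux.eval1, Nat.choose_symm_add, Nat.add_comm (d 1) (d 0)]
    · rintro a ha
      obtain ⟨g, rfl⟩ := Ideal.Quotient.mk_surjective a
      rw [Set.mem_setOf_eq, hσ, Ideal.Quotient.eq, hI, Ideal.mem_span_singleton] at ha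
      -- the symmetry of g on pure powers
      have hgs : ∀ n : ℕ, MvPowerSeries.coeff (R := k) (Finsupp.single 1 n) g
          = MvPowerSeries.coeff (R := k) (Finsupp.single 0 n) g := by
        intro n
        have h0 := NodeAux.coeff_single0_of_dvd ha n
        rw [map_sub, sub_eq_zero] at h0
        rw [← h0, NodeAux.coeff_nodeSwap]
        simp
      -- the preimage
      set f : PowerSeries k :=
        PowerSeries.mk (fun n => MvPowerSeries.coeff (R := k) (Finsupp.single 0 n) g) with hf
      refine ⟨f, ?_⟩
      show Ideal.Quotient.mk I (nodeSumSubst k f) = Ideal.Quotient.mk I g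
      rw [Ideal.Quotient.eq, hI, Ideal.mem_span_singleton]
      -- exhibit the quotient
      refine ⟨fun d => MvPowerSeries.coeff (R := k)
        (d + (Finsupp.single 0 1 + Finsupp.single 1 1)) (nodeSumSubst k f - g), ?_⟩
      have crhs : ∀ u : Fin 2 →₀ ℕ,
          MvPowerSeries.coeff (R := k) u ((fun d => MvPowerSeries.coeff (R := k)
            (d + (Finsupp.single 0 1 + Finsupp.single 1 1)) (nodeSumSubst k f - g)) :
              MvPowerSeries (Fin 2) k)
            = MvPowerSeries.coeff (R := k) (u + (Finsupp.single 0 1 + Finsupp.single 1 1))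
              (nodeSumSubst k f - g) := fun u => rfl
      rw [NodeAux.XY_eq]
      ext d
      erw [MvPowerSeries.coeff_monomial_mul]
      split_ifs with hle
      · rw [one_mul, crhs, tsub_add_cancel_of_le hle]
      · -- off the divisible locus the difference vanishes
        have hcase : d 0 = 0 ∨ d 1 = 0 := by
          by_contra hc
          push_neg at hc
          apply hle
          rw [Finsupp.le_def]
          intro i
          fin_cases i <;> simp [Finsupp.single_apply] <;> omega
        rw [map_sub]
        rcases hcase with h0 | h1
        · have hd : d = Finsupp.single 1 (d 1) := by
            rw [fin2_ext d, h0]; simp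
          rw [hd, NodeAux.coeff_single1, hf, PowerSeries.coeff_mk, hgs, sub_self]
        · have hd : d = Finsupp.single 0 (d 0) := by
            rw [fin2_ext d, h1]; simp
          rw [hd, NodeAux.coeff_single0, hf, PowerSeries.coeff_mk, sub_self]
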